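/- arXiv:1210.3952 — 5 statements merged into one kernel-verified Lean document; each statement's English description precedes it below -/
import Mathlib

section
/- Let Ω ⊆ ℂ be a domain and Π : Ω → ℂ^{d×d} a holomorphic family of projections of rank k. If P₁, P₂ : Ω → ℂ^{d×k} satisfy rank Pᵢ(λ) = k and ℛ(Pᵢ(λ)) = ℛ(Π(λ)) for all λ ∈ Ω (i = 1, 2), then the zero sets coincide: {λ ∈ Ω : det(P₁(λ)ᵀP₁(λ)) = 0} = {λ ∈ Ω : det(P₂(λ)ᵀP₂(λ)) = 0}. Moreover, if P₁ is holomorphic on Ω and det(P₁(·)ᵀP₁(·)) does not vanish identically on Ω, then this common set Λ consists of isolated points of Ω. -/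
/-!
For `P` of full column rank, `det (Pᵀ P) = 0` exactly when some nonzero vector of `ℛ(P)` is
orthogonal to all of `ℛ(P)` for the bilinear form `xᵀ y`. This condition depends on `ℛ(P)` only,
and `ℛ(P₁) = ℛ(Π) = ℛ(P₂)`. For holomorphic `P₁` the function `det (P₁ᵀ P₁)` is holomorphic on the
domain `Ω`, and the identity theorem makes its zeros isolated unless it vanishes identically.
-/

open Matrix Filter Topology

def Submodule.DotNondegenerate {R m : Type*} [CommSemiring R] [Fintype m]
    (W : Submodule R (m → R)) : Prop :=
  ∀ x ∈ W, (∀ u ∈ W, u ⬝ᵥ x = 0) → x = 0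

namespace Matrix

theorem mulVec_injective_of_rank_eq_card {m n K : Type*} [Fintype n] [Field K] {P : Matrix m n K}
    (h : P.rank = Fintype.card n) : Function.Injective P.mulVec := by
  have hker := P.mulVecLin.finrank_range_add_finrank_ker
  rw [← Matrix.rank, h, Module.finrank_fintype_fun_eq_card] at hker
  have : LinearMap.ker P.mulVecLin = ⊥ := Submodule.finrank_eq_zero.mp (by omega)
  exact LinearMap.ker_eq_bot.mp this

variable {m n R : Type*} [Fintype m] [Fintype n]

theorem dotProduct_transpose_mul_self_mulVec [CommSemiring R] (P : Matrix m n R) (v w : n → R) :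
    v ⬝ᵥ (Pᵀ * P) *ᵥ w = P *ᵥ v ⬝ᵥ P *ᵥ w := by
  rw [← mulVec_mulVec, dotProduct_mulVec, vecMul_transpose]

theorem det_transpose_mul_self_ne_zero_iff [CommRing R] [IsDomain R] [DecidableEq n]
    {P : Matrix m n R} (hP : Function.Injective P.mulVec) :
    (Pᵀ * P).det ≠ 0 ↔ (LinearMap.range P.mulVecLin).DotNondegenerate := by
  have hP0 : ∀ v, P *ᵥ v = 0 ↔ v = 0 := fun v => hP.eq_iff' (mulVec_zero P)
  simp only [← separatingLeft_iff_det_ne_zero, separatingLeft_def, Submodule.DotNondegenerate,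
    LinearMap.mem_range, forall_exists_index, forall_apply_eq_imp_iff, mulVecLin_apply,
    dotProduct_transpose_mul_self_mulVec, hP0]
  exact forall_congr' fun v => by simp only [dotProduct_comm]

theorem det_transpose_mul_self_eq_zero_iff_of_range_eq [CommRing R] [IsDomain R] [DecidableEq n]
    {P₁ P₂ : Matrix m n R} (h₁ : Function.Injective P₁.mulVec) (h₂ : Function.Injective P₂.mulVec)
    (hrange : LinearMap.range P₁.mulVecLin = LinearMap.range P₂.mulVecLin) :
    (P₁ᵀ * P₁).det = 0 ↔ (P₂ᵀ * P₂).det = 0 :=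
  not_iff_not.mp <| by
    rw [← ne_eq, ← ne_eq, det_transpose_mul_self_ne_zero_iff h₁,
      det_transpose_mul_self_ne_zero_iff h₂, hrange]

end Matrix

section EntrywiseDifferentiable

variable {𝕜 : Type*} [NontriviallyNormedField 𝕜] {s : Set 𝕜} {l m n : Type*}

theorem differentiableOn_matrix_mul_apply [Fintype m] {A : 𝕜 → Matrix l m 𝕜}
    {B : 𝕜 → Matrix m n 𝕜} (hA : ∀ i j, DifferentiableOn 𝕜 (fun z => A z i j) s)
    (hB : ∀ i j, DifferentiableOn 𝕜 (fun z => B z i j) s) (i : l) (j : n) :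
    DifferentiableOn 𝕜 (fun z => (A z * B z) i j) s := by
  simp only [mul_apply]
  exact DifferentiableOn.fun_sum fun k _ => (hA i k).mul (hB k j)

theorem differentiableOn_matrix_det [Fintype n] [DecidableEq n] {A : 𝕜 → Matrix n n 𝕜}
    (hA : ∀ i j, DifferentiableOn 𝕜 (fun z => A z i j) s) :
    DifferentiableOn 𝕜 (fun z => (A z).det) s := by
  simp only [det_apply, Units.smul_def, zsmul_eq_mul]
  exact DifferentiableOn.fun_sum fun σ _ =>
    (differentiableOn_const _).mul (DifferentiableOn.fun_finsetProd fun i _ => hA (σ i) i)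

end EntrywiseDifferentiable

theorem AnalyticOnNhd.eventually_nhdsNE_ne_zero {𝕜 E : Type*} [NontriviallyNormedField 𝕜]
    [NormedAddCommGroup E] [NormedSpace 𝕜 E] {f : 𝕜 → E} {U : Set 𝕜} {z₀ : 𝕜}
    (hf : AnalyticOnNhd 𝕜 f U) (hU : IsPreconnected U) (h₀ : z₀ ∈ U) (hne : ∃ z ∈ U, f z ≠ 0) :
    ∀ᶠ z in 𝓝[≠] z₀, f z ≠ 0 := by
  obtain ⟨z, hz, hfz⟩ := hne
  by_contra h
  rw [not_eventually] at h
  exact hfz (hf.eqOn_zero_of_preconnected_of_frequently_eq_zero hU h₀ (by simpa using h) hz)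

theorem stmt4_general (d k : ℕ) (Ω : Set ℂ) (hΩo : IsOpen Ω) (hΩconn : IsConnected Ω)
    (Pr : ℂ → Matrix (Fin d) (Fin d) ℂ)
    (P₁ P₂ : ℂ → Matrix (Fin d) (Fin k) ℂ)
    (hP₁ : ∀ z ∈ Ω, (P₁ z).rank = k ∧
      LinearMap.range (P₁ z).mulVecLin = LinearMap.range (Pr z).mulVecLin)
    (hP₂ : ∀ z ∈ Ω, (P₂ z).rank = k ∧
      LinearMap.range (P₂ z).mulVecLin = LinearMap.range (Pr z).mulVecLin) :
    ({z ∈ Ω | ((P₁ z)ᵀ * P₁ z).det = 0} = {z ∈ Ω | ((P₂ z)ᵀ * P₂ z).det = 0}) ∧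
    ((∀ i j, DifferentiableOn ℂ (fun z => P₁ z i j) Ω) →
      (∃ z ∈ Ω, ((P₁ z)ᵀ * P₁ z).det ≠ 0) →
      ∀ z₀ ∈ {z ∈ Ω | ((P₁ z)ᵀ * P₁ z).det = 0}, ∃ r > 0,
        ∀ w ∈ {z ∈ Ω | ((P₁ z)ᵀ * P₁ z).det = 0}, w ∈ Metric.ball z₀ r → w = z₀) := by
  have hinj {P : Matrix (Fin d) (Fin k) ℂ} (h : P.rank = k) : Function.Injective P.mulVec :=
    mulVec_injective_of_rank_eq_card (by rw [h, Fintype.card_fin])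
  refine ⟨?_, fun hHol hne z₀ hz₀ => ?_⟩
  · ext z
    exact and_congr_right fun hz => det_transpose_mul_self_eq_zero_iff_of_range_eq
      (hinj (hP₁ z hz).1) (hinj (hP₂ z hz).1) ((hP₁ z hz).2.trans (hP₂ z hz).2.symm)
  · have hdet : AnalyticOnNhd ℂ (fun z => ((P₁ z)ᵀ * P₁ z).det) Ω :=
      (differentiableOn_matrix_det
        (differentiableOn_matrix_mul_apply (fun i j => hHol j i) hHol)).analyticOnNhd hΩo
    obtain ⟨r, hr, hball⟩ := Metric.nhdsWithin_basis_ball.eventually_iff.mp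
      (hdet.eventually_nhdsNE_ne_zero hΩconn.isPreconnected hz₀.1 hne)
    exact ⟨r, hr, fun w hw hwr => by_contra fun hwz₀ => hball ⟨hwr, hwz₀⟩ hw.2⟩

/-- For a holomorphic family of rank-`k` projections `Π` on a domain `Ω`,
if `P₁, P₂ : Ω → ℂ^{d×k}` have rank `k` and `ℛ(Pᵢ(λ)) = ℛ(Π(λ))` on `Ω`, then the
zero sets of `det(Pᵢ(·)ᵀPᵢ(·))` coincide; moreover, if `P₁` is holomorphic and
`det(P₁(·)ᵀP₁(·))` does not vanish identically on `Ω`, this common set consists of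
isolated points of `Ω`. -/
theorem stmt4 (d k : ℕ) (Ω : Set ℂ) (hΩo : IsOpen Ω) (hΩconn : IsConnected Ω)
    (Pr : ℂ → Matrix (Fin d) (Fin d) ℂ)
    (hPrHol : ∀ i j, DifferentiableOn ℂ (fun z => Pr z i j) Ω)
    (hproj : ∀ z ∈ Ω, Pr z * Pr z = Pr z)
    (hrank : ∀ z ∈ Ω, (Pr z).rank = k)
    (P₁ P₂ : ℂ → Matrix (Fin d) (Fin k) ℂ)
    (hP₁ : ∀ z ∈ Ω, (P₁ z).rank = k ∧
      LinearMap.range (P₁ z).mulVecLin = LinearMap.range (Pr z).mulVecLin)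
    (hP₂ : ∀ z ∈ Ω, (P₂ z).rank = k ∧
      LinearMap.range (P₂ z).mulVecLin = LinearMap.range (Pr z).mulVecLin) :
    ({z ∈ Ω | ((P₁ z)ᵀ * P₁ z).det = 0} = {z ∈ Ω | ((P₂ z)ᵀ * P₂ z).det = 0}) ∧
    ((∀ i j, DifferentiableOn ℂ (fun z => P₁ z i j) Ω) →
      (∃ z ∈ Ω, ((P₁ z)ᵀ * P₁ z).det ≠ 0) →
      ∀ z₀ ∈ {z ∈ Ω | ((P₁ z)ᵀ * P₁ z).det = 0}, ∃ r > 0,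
        ∀ w ∈ {z ∈ Ω | ((P₁ z)ᵀ * P₁ z).det = 0}, w ∈ Metric.ball z₀ r → w = z₀) :=
  stmt4_general d k Ω hΩo hΩconn Pr P₁ P₂ hP₁ hP₂
end

section
/- Let Ω ⊆ ℂ be a domain, let P : Ω → ℂ^{d×k} and Q : Ω → ℂ^{d×(d−k)} be holomorphic with rank P(λ) = k and rank Q(λ) = d−k for all λ ∈ Ω, set 𝒴(λ) = (P(λ)|Q(λ)) and ℰ(λ) = det 𝒴(λ), and let 𝒴_U, 𝒴_V : Ω → ℂ^{d×d} be the unique holomorphic maps with ℰ(λ)I_d = 𝒴_U(λ) + 𝒴_V(λ) satisfying ℛ(𝒴_U(λ)) = ℛ(P(λ)), 𝒩(𝒴_U(λ)) = ℛ(Q(λ)), ℛ(𝒴_V(λ)) = ℛ(Q(λ)), 𝒩(𝒴_V(λ)) = ℛ(P(λ)) whenever ℰ(λ) ≠ 0. Suppose λ₀ ∈ Ω is a simple zero of ℰ, i.e. ℰ(λ₀) = 0 and ℰ'(λ₀) ≠ 0. Then there are nonzero vectors v₀, w₀ ∈ ℂ^d with 𝒩(𝒴(λ₀)) = span{v₀}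 and 𝒩(𝒴(λ₀)ᵀ) = span{w₀}; writing v₀ = (v₀,₁, v₀,₂) with v₀,₁ ∈ ℂ^k, v₀,₂ ∈ ℂ^{d−k}, the vector w₀ can be normalized so that w₀ᵀ𝒴'(λ₀)v₀ = 1, and then 𝒴_U(λ₀) = ℰ'(λ₀)·P(λ₀)v₀,₁·w₀ᵀ = −ℰ'(λ₀)·Q(λ₀)v₀,₂·w₀ᵀ = −𝒴_V(λ₀). Moreover, if v₀ is normalized so that v₀ᵀv₀ = 1, then ℰ'(λ₀) = v₀ᵀ · adj(𝒴(λ₀)) · 𝒴'(λ₀) · v₀, where adj denotes the adjugate matrix. -/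
/-!
Jacobi's formula `ℰ' = tr (adj 𝒴 · 𝒴')` shows that `adj 𝒴(λ₀) ≠ 0` at a simple zero. Since
`𝒴(λ₀) · adj 𝒴(λ₀) = adj 𝒴(λ₀) · 𝒴(λ₀) = 0` and a nonzero entry of the adjugate is a nonzero
minor of order `d - 1`, `𝒴(λ₀)` has corank one and the adjugate is the rank-one matrix
`ℰ'(λ₀) · v₀ w₀ᵀ`, its column `v₀` spanning `𝒩(𝒴(λ₀))`, its row `w₀` spanning `𝒩(𝒴(λ₀)ᵀ)`, the
scale being fixed by the trace formula once `w₀ᵀ 𝒴'(λ₀) v₀ = 1`. Where `ℰ ≠ 0`, the kernel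
conditions give `𝒴_U 𝒴 = ℰ · (P|0)`, i.e. `𝒴_U = (P|0) · adj 𝒴`; the zeros of `ℰ` being isolated
near a simple zero, continuity carries this identity to `λ₀`, and `𝒴(λ₀) v₀ = 0` turns `P v₀,₁`
into `-Q v₀,₂`.
-/

open Filter Finset Matrix Topology

namespace Matrix

variable {n : Type*} [Fintype n] [DecidableEq n]

theorem trace_adjugate_mul {R : Type*} [CommRing R] (A B : Matrix n n R) :
    (adjugate A * B).trace = ∑ i, (A.updateCol i fun r => B r i).det := by
  refine Finset.sum_congr rfl fun i _ => ?_
  rw [← cramer_apply, cramer_eq_adjugate_mulVec]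
  rfl

theorem hasDerivAt_det {𝕜 : Type*} [NontriviallyNormedField 𝕜] {Y : 𝕜 → Matrix n n 𝕜}
    {Y' : Matrix n n 𝕜} {z₀ : 𝕜} (hY : ∀ i j, HasDerivAt (fun z => Y z i j) (Y' i j) z₀) :
    HasDerivAt (fun z => (Y z).det) (adjugate (Y z₀) * Y').trace z₀ := by
  have hsum : HasDerivAt (fun z => (Y z).det)
      (∑ σ : Equiv.Perm n, (Equiv.Perm.sign σ : 𝕜) *
        ∑ i, (∏ j ∈ univ.erase i, Y z₀ (σ j) j) • Y' (σ i) i) z₀ := by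
    simp only [det_apply']
    exact HasDerivAt.fun_sum fun σ _ =>
      (HasDerivAt.fun_finsetProd fun i _ => hY (σ i) i).const_mul _
  convert hsum using 1
  simp only [trace_adjugate_mul, det_apply', Finset.mul_sum]
  rw [Finset.sum_comm]
  refine Finset.sum_congr rfl fun σ _ => Finset.sum_congr rfl fun i _ => ?_
  rw [← Finset.mul_prod_erase univ _ (mem_univ i), updateCol_self, smul_eq_mul, mul_comm (Y' _ _),
    Finset.prod_congr rfl fun j hj => updateCol_ne (Finset.ne_of_mem_erase hj)]

variable {K : Type*} [Field K]

theorem mulVec_adjugate_col_eq_zero {A : Matrix n n K} (hA : A.det = 0) (j : n) :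
    A *ᵥ (adjugate A).col j = 0 := by
  rw [← mulVec_single_one, mulVec_mulVec, mul_adjugate, hA, zero_smul, zero_mulVec]

theorem ker_mulVecLin_eq_span_adjugate_col {A : Matrix n n K} (hA : A.det = 0) {i₀ j₀ : n}
    (h : adjugate A i₀ j₀ ≠ 0) :
    LinearMap.ker A.mulVecLin = Submodule.span K {(adjugate A).col j₀} := by
  -- Replacing row `j₀` of `A` by the `i₀`-th unit row gives a matrix of determinant `adj A i₀ j₀`.
  have hinj : ∀ x, A *ᵥ x = 0 → x i₀ = 0 → x = 0 := by
    intro x hx hxi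
    set M := A.updateRow j₀ (Pi.single i₀ 1)
    refine eq_zero_of_mulVec_eq_zero (M := M) (by rwa [← adjugate_apply]) (funext fun j => ?_)
    by_cases hj : j = j₀
    · subst hj
      simp [M, mulVec, hxi]
    · simpa [M, mulVec, updateRow_ne hj] using congrFun hx j
  refine le_antisymm (fun x hx => ?_) ?_
  · rw [Submodule.mem_span_singleton]
    refine ⟨x i₀ / adjugate A i₀ j₀, (sub_eq_zero.1 (hinj _ ?_ ?_)).symm⟩
    · rw [mulVec_sub, mulVec_smul, mulVec_adjugate_col_eq_zero hA, smul_zero, sub_zero]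
      exact hx
    · simp [h]
  · rw [Submodule.span_le, Set.singleton_subset_iff]
    exact mulVec_adjugate_col_eq_zero hA j₀

theorem ker_transpose_mulVecLin_eq_span_adjugate_row {A : Matrix n n K} (hA : A.det = 0)
    {i₀ j₀ : n} (h : adjugate A i₀ j₀ ≠ 0) :
    LinearMap.ker Aᵀ.mulVecLin = Submodule.span K {(adjugate A).row i₀} := by
  have hAt : adjugate Aᵀ j₀ i₀ ≠ 0 := by rwa [← adjugate_transpose]
  simpa [← adjugate_transpose] using
    ker_mulVecLin_eq_span_adjugate_col (by rwa [det_transpose]) hAt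

theorem adjugate_apply_smul_adjugate {A : Matrix n n K} (hA : A.det = 0) {i₀ j₀ : n}
    (h : adjugate A i₀ j₀ ≠ 0) :
    adjugate A i₀ j₀ • adjugate A = vecMulVec ((adjugate A).col j₀) ((adjugate A).row i₀) := by
  ext i j
  obtain ⟨c, hc⟩ := Submodule.mem_span_singleton.1 <|
    (ker_mulVecLin_eq_span_adjugate_col hA h).le (mulVec_adjugate_col_eq_zero hA j)
  have hcol : ∀ i, c * adjugate A i j₀ = adjugate A i j := fun i => congrFun hc i
  simp only [smul_apply, vecMulVec_apply, smul_eq_mul, col_apply, row_apply, ← hcol]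
  ring

theorem exists_adjugate_eq_smul_vecMulVec {Y Y' : Matrix n n K} (hY : Y.det = 0)
    (htr : (adjugate Y * Y').trace ≠ 0) :
    ∃ v w : n → K, v ≠ 0 ∧ w ≠ 0 ∧
      LinearMap.ker Y.mulVecLin = Submodule.span K {v} ∧
      LinearMap.ker Yᵀ.mulVecLin = Submodule.span K {w} ∧
      w ⬝ᵥ (Y' *ᵥ v) = 1 ∧
      adjugate Y = (adjugate Y * Y').trace • vecMulVec v w := by
  obtain ⟨i₀, j₀, ha⟩ : ∃ i j, adjugate Y i j ≠ 0 := by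
    by_contra! h
    exact htr (by simp [show adjugate Y = 0 from ext h])
  set v := (adjugate Y).col j₀
  set u := (adjugate Y).row i₀
  have hrank : adjugate Y i₀ j₀ • adjugate Y = vecMulVec v u := adjugate_apply_smul_adjugate hY ha
  have hs : u ⬝ᵥ (Y' *ᵥ v) = adjugate Y i₀ j₀ * (adjugate Y * Y').trace := by
    rw [dotProduct_mulVec, dotProduct_comm, ← trace_vecMulVec, ← vecMulVec_mul, ← hrank,
      smul_mul_assoc, trace_smul, smul_eq_mul]
  have hs0 : u ⬝ᵥ (Y' *ᵥ v) ≠ 0 := by rw [hs]; exact mul_ne_zero ha htr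
  refine ⟨v, (u ⬝ᵥ (Y' *ᵥ v))⁻¹ • u, fun hv => ha (congrFun hv i₀),
    smul_ne_zero (inv_ne_zero hs0) fun hu => ha (congrFun hu j₀),
    ker_mulVecLin_eq_span_adjugate_col hY ha, ?_, ?_, ?_⟩
  · rw [ker_transpose_mulVecLin_eq_span_adjugate_row hY ha]
    exact (Submodule.span_singleton_smul_eq (IsUnit.mk0 _ (inv_ne_zero hs0)) u).symm
  · rw [smul_dotProduct, smul_eq_mul, inv_mul_cancel₀ hs0]
  · rw [vecMulVec_smul, ← hrank, smul_smul, smul_smul, hs]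
    convert (one_smul K (adjugate Y)).symm using 2
    field_simp

theorem mul_eq_zero_of_range_le_ker {R : Type*} [CommRing R] {l m p : Type*} [Fintype m]
    [Fintype p] [DecidableEq p] {A : Matrix l m R} {B : Matrix m p R}
    (h : LinearMap.range B.mulVecLin ≤ LinearMap.ker A.mulVecLin) : A * B = 0 := by
  ext i j
  have hj : A *ᵥ (B *ᵥ Pi.single j 1) = 0 := h ⟨Pi.single j 1, rfl⟩
  rw [mulVec_mulVec, mulVec_single_one] at hj
  exact congrFun hj i

variable {k l : Type*} [Fintype k] [Fintype l] [DecidableEq k] [DecidableEq l]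

theorem eq_fromCols_zero_mul_adjugate {P : Matrix (k ⊕ l) k K} {Q : Matrix (k ⊕ l) l K}
    {U V : Matrix (k ⊕ l) (k ⊕ l) K} (hdet : (fromCols P Q).det ≠ 0)
    (hsum : (fromCols P Q).det • 1 = U + V) (hUQ : U * Q = 0) (hVP : V * P = 0) :
    U = fromCols P 0 * adjugate (fromCols P Q) := by
  have hUP : U * P = (fromCols P Q).det • P := by
    rw [eq_sub_of_add_eq hsum.symm, Matrix.sub_mul, hVP, sub_zero, Matrix.smul_mul, Matrix.one_mul]
  have hUY : U * fromCols P Q = (fromCols P Q).det • fromCols P 0 := by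
    rw [mul_fromCols, hUP, hUQ]
    ext i (j | j) <;> simp
  apply smul_right_injective _ hdet
  calc (fromCols P Q).det • U = U * (fromCols P Q * adjugate (fromCols P Q)) := by
        rw [mul_adjugate, Matrix.mul_smul, Matrix.mul_one]
    _ = (fromCols P Q).det • (fromCols P 0 * adjugate (fromCols P Q)) := by
        rw [← Matrix.mul_assoc, hUY, smul_mul_assoc]

end Matrix

theorem eq_of_continuousAt_of_eq_where_ne_zero {𝕜 E : Type*} [NontriviallyNormedField 𝕜]
    [TopologicalSpace E] [T2Space E] {f g : 𝕜 → E} {h : 𝕜 → 𝕜} {h' z₀ : 𝕜} {s : Set 𝕜}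
    (hs : s ∈ 𝓝 z₀) (hf : ContinuousAt f z₀) (hg : ContinuousAt g z₀) (hh : HasDerivAt h h' z₀)
    (hh' : h' ≠ 0) (hfg : ∀ z ∈ s, h z ≠ 0 → f z = g z) : f z₀ = g z₀ := by
  have hne : f =ᶠ[𝓝[≠] z₀] g := by
    filter_upwards [hh.eventually_ne hh', nhdsWithin_le_nhds hs] with z hz hzs
    exact hfg z hzs hz
  exact ((hf.eventuallyEq_nhds_iff_eventuallyEq_nhdsNE hg).1 hne).eq_of_nhds

theorem continuousAt_fromCols_zero_mul_adjugate {X R : Type*} [TopologicalSpace X] [CommRing R]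
    [TopologicalSpace R] [IsTopologicalRing R] {k l : Type*} [Fintype k] [Fintype l]
    [DecidableEq k] [DecidableEq l] {P : X → Matrix (k ⊕ l) k R} {Q : X → Matrix (k ⊕ l) l R}
    {x₀ : X} (hY : ContinuousAt (fun x => fromCols (P x) (Q x)) x₀) :
    ContinuousAt (fun x => fromCols (P x) 0 * adjugate (fromCols (P x) (Q x))) x₀ := by
  have hP : ContinuousAt (fun x => fromCols (P x) (0 : Matrix (k ⊕ l) l R)) x₀ :=
    continuousAt_pi.2 fun i => continuousAt_pi.2 fun
      | .inl a => continuousAt_pi.1 (continuousAt_pi.1 hY i) (.inl a)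
      | .inr _ => continuousAt_const
  exact hP.mul (continuous_id.matrix_adjugate.continuousAt.comp hY)

theorem stmt8_general (k l : ℕ) (Ω : Set ℂ) (hΩo : IsOpen Ω)
    (P : ℂ → Matrix (Fin k ⊕ Fin l) (Fin k) ℂ)
    (Q : ℂ → Matrix (Fin k ⊕ Fin l) (Fin l) ℂ)
    (YU YV : ℂ → Matrix (Fin k ⊕ Fin l) (Fin k ⊕ Fin l) ℂ)
    (hYUhol : ∀ i j, DifferentiableOn ℂ (fun z => YU z i j) Ω)
    (hsum : ∀ z ∈ Ω,
      (Matrix.fromCols (P z) (Q z)).det •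
        (1 : Matrix (Fin k ⊕ Fin l) (Fin k ⊕ Fin l) ℂ) = YU z + YV z)
    (hUV : ∀ z ∈ Ω, (Matrix.fromCols (P z) (Q z)).det ≠ 0 →
      LinearMap.range (YU z).mulVecLin = LinearMap.range (P z).mulVecLin ∧
      LinearMap.ker (YU z).mulVecLin = LinearMap.range (Q z).mulVecLin ∧
      LinearMap.range (YV z).mulVecLin = LinearMap.range (Q z).mulVecLin ∧
      LinearMap.ker (YV z).mulVecLin = LinearMap.range (P z).mulVecLin)
    (z₀ : ℂ) (hz₀ : z₀ ∈ Ω)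
    (E' : ℂ) (Y' : Matrix (Fin k ⊕ Fin l) (Fin k ⊕ Fin l) ℂ)
    (hEzero : (Matrix.fromCols (P z₀) (Q z₀)).det = 0)
    (hE' : HasDerivAt (fun z => (Matrix.fromCols (P z) (Q z)).det) E' z₀)
    (hE'ne : E' ≠ 0)
    (hY' : ∀ i j, HasDerivAt (fun z => Matrix.fromCols (P z) (Q z) i j) (Y' i j) z₀) :
    ∃ v₀ w₀ : Fin k ⊕ Fin l → ℂ, v₀ ≠ 0 ∧ w₀ ≠ 0 ∧
      LinearMap.ker (Matrix.fromCols (P z₀) (Q z₀)).mulVecLin = Submodule.span ℂ {v₀} ∧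
      LinearMap.ker ((Matrix.fromCols (P z₀) (Q z₀))ᵀ).mulVecLin = Submodule.span ℂ {w₀} ∧
      w₀ ⬝ᵥ (Y' *ᵥ v₀) = 1 ∧
      YU z₀ = E' • Matrix.vecMulVec (P z₀ *ᵥ fun a => v₀ (Sum.inl a)) w₀ ∧
      YU z₀ = -(E' • Matrix.vecMulVec (Q z₀ *ᵥ fun b => v₀ (Sum.inr b)) w₀) ∧
      YU z₀ = -YV z₀ ∧
      (v₀ ⬝ᵥ v₀ = 1 →
        E' = v₀ ⬝ᵥ (((Matrix.fromCols (P z₀) (Q z₀)).adjugate * Y') *ᵥ v₀)) := by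
  have hE : E' = (adjugate (fromCols (P z₀) (Q z₀)) * Y').trace := hE'.unique (hasDerivAt_det hY')
  obtain ⟨v, w, hv, hw, hker, hkerT, hnorm, hadj⟩ :=
    exists_adjugate_eq_smul_vecMulVec hEzero (hE ▸ hE'ne)
  rw [← hE] at hadj
  have hYU : YU z₀ = fromCols (P z₀) 0 * adjugate (fromCols (P z₀) (Q z₀)) := by
    refine eq_of_continuousAt_of_eq_where_ne_zero (f := YU)
      (g := fun z => fromCols (P z) 0 * adjugate (fromCols (P z) (Q z)))
      (hΩo.mem_nhds hz₀) ?_ ?_ hE' hE'ne fun z hz hdet => ?_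
    · exact continuousAt_pi.2 fun i => continuousAt_pi.2 fun j =>
        (hYUhol i j).continuousOn.continuousAt (hΩo.mem_nhds hz₀)
    · exact continuousAt_fromCols_zero_mul_adjugate <|
        continuousAt_pi.2 fun i => continuousAt_pi.2 fun j => (hY' i j).continuousAt
    · obtain ⟨-, hkerU, -, hkerV⟩ := hUV z hz hdet
      exact eq_fromCols_zero_mul_adjugate hdet (hsum z hz) (mul_eq_zero_of_range_le_ker hkerU.ge)
        (mul_eq_zero_of_range_le_ker hkerV.ge)
  have hPv : P z₀ *ᵥ (fun a => v (Sum.inl a)) = -(Q z₀ *ᵥ fun b => v (Sum.inr b)) := by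
    have := LinearMap.mem_ker.1 (hker.ge (Submodule.mem_span_singleton_self v))
    rw [mulVecLin_apply, fromCols_mulVec] at this
    exact eq_neg_of_add_eq_zero_left this
  have hU : YU z₀ = E' • vecMulVec (P z₀ *ᵥ fun a => v (Sum.inl a)) w := by
    rw [hYU, hadj, Matrix.mul_smul, mul_vecMulVec, fromCols_mulVec, zero_mulVec, add_zero]
    rfl
  refine ⟨v, w, hv, hw, hker, hkerT, hnorm, hU, ?_, ?_, fun hvv => ?_⟩
  · rw [hU, hPv, neg_vecMulVec, smul_neg]
  · have := hsum z₀ hz₀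
    rw [hEzero, zero_smul] at this
    exact eq_neg_of_add_eq_zero_left this.symm
  · rw [hadj, smul_mul_assoc, smul_mulVec, ← mulVec_mulVec, vecMulVec_mulVec, hnorm]
    simp [hvv]

/-- Behavior of `𝒴_U, 𝒴_V` at a simple zero `z₀` of the Evans function
`ℰ(λ) = det 𝒴(λ)`, `𝒴(λ) = (P(λ)|Q(λ))`. Here `d = k + l`, `ℂ^d` is modeled as
`Fin k ⊕ Fin l → ℂ`, `v₀,₁ = v₀ ∘ Sum.inl`, `v₀,₂ = v₀ ∘ Sum.inr`, `E'` is `ℰ'(z₀)` and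
`Y'` the entrywise derivative `𝒴'(z₀)`. -/
theorem stmt8 (k l : ℕ) (Ω : Set ℂ) (hΩo : IsOpen Ω) (hΩconn : IsConnected Ω)
    (P : ℂ → Matrix (Fin k ⊕ Fin l) (Fin k) ℂ)
    (Q : ℂ → Matrix (Fin k ⊕ Fin l) (Fin l) ℂ)
    (hPhol : ∀ i j, DifferentiableOn ℂ (fun z => P z i j) Ω)
    (hQhol : ∀ i j, DifferentiableOn ℂ (fun z => Q z i j) Ω)
    (hPrank : ∀ z ∈ Ω, (P z).rank = k)
    (hQrank : ∀ z ∈ Ω, (Q z).rank = l)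
    (YU YV : ℂ → Matrix (Fin k ⊕ Fin l) (Fin k ⊕ Fin l) ℂ)
    (hYUhol : ∀ i j, DifferentiableOn ℂ (fun z => YU z i j) Ω)
    (hYVhol : ∀ i j, DifferentiableOn ℂ (fun z => YV z i j) Ω)
    (hsum : ∀ z ∈ Ω,
      (Matrix.fromCols (P z) (Q z)).det •
        (1 : Matrix (Fin k ⊕ Fin l) (Fin k ⊕ Fin l) ℂ) = YU z + YV z)
    (hUV : ∀ z ∈ Ω, (Matrix.fromCols (P z) (Q z)).det ≠ 0 →
      LinearMap.range (YU z).mulVecLin = LinearMap.range (P z).mulVecLin ∧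
      LinearMap.ker (YU z).mulVecLin = LinearMap.range (Q z).mulVecLin ∧
      LinearMap.range (YV z).mulVecLin = LinearMap.range (Q z).mulVecLin ∧
      LinearMap.ker (YV z).mulVecLin = LinearMap.range (P z).mulVecLin)
    (z₀ : ℂ) (hz₀ : z₀ ∈ Ω)
    (E' : ℂ) (Y' : Matrix (Fin k ⊕ Fin l) (Fin k ⊕ Fin l) ℂ)
    (hEzero : (Matrix.fromCols (P z₀) (Q z₀)).det = 0)
    (hE' : HasDerivAt (fun z => (Matrix.fromCols (P z) (Q z)).det) E' z₀)
    (hE'ne : E' ≠ 0)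
    (hY' : ∀ i j, HasDerivAt (fun z => Matrix.fromCols (P z) (Q z) i j) (Y' i j) z₀) :
    ∃ v₀ w₀ : Fin k ⊕ Fin l → ℂ, v₀ ≠ 0 ∧ w₀ ≠ 0 ∧
      LinearMap.ker (Matrix.fromCols (P z₀) (Q z₀)).mulVecLin = Submodule.span ℂ {v₀} ∧
      LinearMap.ker ((Matrix.fromCols (P z₀) (Q z₀))ᵀ).mulVecLin = Submodule.span ℂ {w₀} ∧
      w₀ ⬝ᵥ (Y' *ᵥ v₀) = 1 ∧
      YU z₀ = E' • Matrix.vecMulVec (P z₀ *ᵥ fun a => v₀ (Sum.inl a)) w₀ ∧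
      YU z₀ = -(E' • Matrix.vecMulVec (Q z₀ *ᵥ fun b => v₀ (Sum.inr b)) w₀) ∧
      YU z₀ = -YV z₀ ∧
      (v₀ ⬝ᵥ v₀ = 1 →
        E' = v₀ ⬝ᵥ (((Matrix.fromCols (P z₀) (Q z₀)).adjugate * Y') *ᵥ v₀)) :=
  stmt8_general k l Ω hΩo P Q YU YV hYUhol hsum hUV z₀ hz₀ E' Y' hEzero hE' hE'ne hY'
end

section
/- Let B : ℝ → ℂ^{d×d} be measurable with ∫_ℝ ‖B(ξ)‖ dξ < ∞ and set K = exp(∫_ℝ ‖B(ξ)‖ dξ). Let J ⊆ ℝ be an interval and let (y, z) be an H_J-pair. Then for all x, x₀ ∈ J: ‖y(x) − y(x₀)‖ ≤ K · (∫_{[x₀,x]} ‖B(ξ)‖ dξ) · ‖y(x₀)‖ + K · √|x − x₀| · (∫_J ‖z(ξ)‖² dξ)^{1/2}, where [x₀,x] denotes the interval between x₀ and x. -/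
/-!
Write `φ τ = ‖y τ - y x₀‖`. Since `y` is a primitive of `B y - z` and `‖y‖ ≤ φ + ‖y x₀‖`,
`φ ≤ c + ∫ ‖B‖ φ` on `[x₀, x]` with `c = ‖y x₀‖ ∫ ‖B‖ + ∫ ‖z‖`. Grönwall's inequality for the
integrable weight `‖B‖` gives `φ x ≤ c · exp (∫ ‖B‖)`, and Cauchy–Schwarz bounds `∫ ‖z‖` over
`[x₀, x]` by `√|x - x₀| · ‖z‖_{L²(J)}`.
Grönwall is proved with absolutely continuous calculus: `(c + ∫ b φ) · exp (-∫ b)` has a.e.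
derivative `b (φ - c - ∫ b φ) exp (-∫ b) ≤ 0`, hence is antitone.
-/

open MeasureTheory intervalIntegral

/-- An `H_J`-pair for the coefficient `B` on an interval `J ⊆ ℝ`: `y : J → ℂ^d` is
continuous, `z` is measurable with `∫_J ‖z‖² < ∞`, and
`y(x) = y(x₀) + ∫_{x₀}^x (B(ξ)y(ξ) − z(ξ)) dξ` for all `x, x₀ ∈ J` (encoding that `y` is
locally absolutely continuous with `−y' + By = z` a.e. on `J`).  Vectors are modeled in
`EuclideanSpace ℂ (Fin d)` and matrices as its continuous linear endomorphisms. -/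
def IsHJPair (d : ℕ)
    (B : ℝ → (EuclideanSpace ℂ (Fin d) →L[ℂ] EuclideanSpace ℂ (Fin d)))
    (J : Set ℝ) (y z : ℝ → EuclideanSpace ℂ (Fin d)) : Prop :=
  ContinuousOn y J ∧
  AEStronglyMeasurable z (volume.restrict J) ∧
  IntegrableOn (fun ξ => ‖z ξ‖ ^ 2) J ∧
  ∀ x ∈ J, ∀ x₀ ∈ J, y x = y x₀ + ∫ ξ in x₀..x, (B ξ (y ξ) - z ξ)

open Set
open scoped Interval

theorem LipschitzOnWith.comp_absolutelyContinuousOnInterval {X Y : Type*} [PseudoMetricSpace X]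
    [PseudoMetricSpace Y] {f : ℝ → X} {a b : ℝ} {g : X → Y} {K : NNReal} {s : Set X}
    (hg : LipschitzOnWith K g s) (hf : AbsolutelyContinuousOnInterval f a b)
    (hfs : MapsTo f (uIcc a b) s) : AbsolutelyContinuousOnInterval (g ∘ f) a b := by
  unfold AbsolutelyContinuousOnInterval at hf ⊢
  refine squeeze_zero' (.of_forall fun _ => Finset.sum_nonneg fun _ _ => dist_nonneg)
    ?_ (by simpa using hf.const_mul (K : ℝ))
  filter_upwards [Filter.mem_inf_of_right (Filter.mem_principal_self _)] with E hE
  rw [Finset.mul_sum]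
  exact Finset.sum_le_sum fun i hi =>
    hg.dist_le_mul _ (hfs (hE.1 i hi).1) _ (hfs (hE.1 i hi).2)

theorem LocallyLipschitz.comp_absolutelyContinuousOnInterval {F Y : Type*}
    [SeminormedAddCommGroup F] [PseudoMetricSpace Y] {f : ℝ → F} {a b : ℝ} {g : F → Y}
    (hg : LocallyLipschitz g) (hf : AbsolutelyContinuousOnInterval f a b) :
    AbsolutelyContinuousOnInterval (g ∘ f) a b := by
  obtain ⟨K, hK⟩ := hg.locallyLipschitzOn.exists_lipschitzOnWith_of_compact
    (isCompact_uIcc.image_of_continuousOn hf.continuousOn)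
  exact hK.comp_absolutelyContinuousOnInterval hf (mapsTo_image f _)

theorem AbsolutelyContinuousOnInterval.le_of_ae_deriv_nonpos {f : ℝ → ℝ} {a b : ℝ}
    (hf : AbsolutelyContinuousOnInterval f a b) (hab : a ≤ b)
    (hf' : ∀ᵐ x, x ∈ Icc a b → deriv f x ≤ 0) : f b ≤ f a := by
  have hint : 0 ≤ ∫ x in a..b, -deriv f x :=
    integral_nonneg_of_ae_restrict hab <| by
      filter_upwards [ae_restrict_mem measurableSet_Icc, ae_restrict_of_ae hf'] with x hx hx'
      simpa using hx' hx
  rw [intervalIntegral.integral_neg, hf.integral_deriv_eq_sub] at hint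
  linarith

theorem gronwall_integral_of_le {φ b : ℝ → ℝ} {c s t : ℝ} (hst : s ≤ t)
    (hb : IntervalIntegrable b volume s t) (hb0 : ∀ ξ ∈ Icc s t, 0 ≤ b ξ)
    (hbφ : IntervalIntegrable (fun ξ => b ξ * φ ξ) volume s t)
    (h : ∀ τ ∈ Icc s t, φ τ ≤ c + ∫ ξ in s..τ, b ξ * φ ξ) :
    φ t ≤ c * Real.exp (∫ ξ in s..t, b ξ) := by
  set F : ℝ → ℝ := fun τ => c + ∫ ξ in s..τ, b ξ * φ ξ
  set E : ℝ → ℝ := fun τ => ∫ ξ in s..τ, b ξ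
  have hs : s ∈ uIcc s t := left_mem_uIcc
  have hF : AbsolutelyContinuousOnInterval F s t :=
    ((LipschitzWith.const c).lipschitzOnWith.absolutelyContinuousOnInterval).add
      (hbφ.absolutelyContinuousOnInterval_intervalIntegral hs)
  have hG : AbsolutelyContinuousOnInterval (fun τ => Real.exp (-E τ)) s t :=
    Real.contDiff_exp.locallyLipschitz.comp_absolutelyContinuousOnInterval
      (hb.absolutelyContinuousOnInterval_intervalIntegral hs).neg
  have hK : F t * Real.exp (-E t) ≤ F s * Real.exp (-E s) := by
    refine (hF.fun_mul hG).le_of_ae_deriv_nonpos hst ?_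
    filter_upwards [hbφ.ae_hasDerivAt_integral, hb.ae_hasDerivAt_integral] with x hR hE hx
    have hx' : x ∈ uIcc s t := Icc_subset_uIcc hx
    have hd : HasDerivAt (fun τ => F τ * Real.exp (-E τ))
        (b x * φ x * Real.exp (-E x) + F x * (Real.exp (-E x) * -b x)) x :=
      ((hR hx' s hs).const_add c).mul (hE hx' s hs).neg.exp
    rw [hd.deriv, show b x * φ x * Real.exp (-E x) + F x * (Real.exp (-E x) * -b x) =
      b x * (φ x - F x) * Real.exp (-E x) by ring]
    exact mul_nonpos_of_nonpos_of_nonneg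
      (mul_nonpos_of_nonneg_of_nonpos (hb0 x hx) (sub_nonpos.2 (h x hx))) (Real.exp_pos _).le
  have hFs : F s * Real.exp (-E s) = c := by simp [F, E]
  calc φ t ≤ F t := h t (right_mem_Icc.2 hst)
    _ = F t * Real.exp (-E t) * Real.exp (E t) := by
      rw [mul_assoc, ← Real.exp_add, neg_add_cancel, Real.exp_zero, mul_one]
    _ ≤ c * Real.exp (E t) := by
      rw [← hFs]; exact mul_le_mul_of_nonneg_right hK (Real.exp_pos _).le

theorem gronwall_integral_of_ge {φ b : ℝ → ℝ} {c s t : ℝ} (hts : t ≤ s)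
    (hb : IntervalIntegrable b volume t s) (hb0 : ∀ ξ ∈ Icc t s, 0 ≤ b ξ)
    (hbφ : IntervalIntegrable (fun ξ => b ξ * φ ξ) volume t s)
    (h : ∀ τ ∈ Icc t s, φ τ ≤ c + ∫ ξ in τ..s, b ξ * φ ξ) :
    φ t ≤ c * Real.exp (∫ ξ in t..s, b ξ) := by
  have hneg : ∀ {σ}, σ ∈ Icc (-s) (-t) → -σ ∈ Icc t s := fun hσ =>
    ⟨le_neg_of_le_neg hσ.2, neg_le_of_neg_le hσ.1⟩
  have key := gronwall_integral_of_le (φ := fun σ => φ (-σ)) (b := fun σ => b (-σ)) (c := c)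
    (neg_le_neg hts) ((IntervalIntegrable.iff_comp_neg).1 hb).symm
    (fun σ hσ => hb0 _ (hneg hσ)) ((IntervalIntegrable.iff_comp_neg).1 hbφ).symm
    (fun σ hσ => by simpa [integral_comp_neg (fun ξ => b ξ * φ ξ)] using h _ (hneg hσ))
  simpa [integral_comp_neg b] using key

theorem gronwall_setIntegral_uIoc {φ b : ℝ → ℝ} {c s t : ℝ}
    (hb : IntegrableOn b (Ι s t)) (hb0 : ∀ ξ ∈ uIcc s t, 0 ≤ b ξ)
    (hbφ : IntegrableOn (fun ξ => b ξ * φ ξ) (Ι s t))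
    (h : ∀ τ ∈ uIcc s t, φ τ ≤ c + ∫ ξ in Ι s τ, b ξ * φ ξ) :
    φ t ≤ c * Real.exp (∫ ξ in Ι s t, b ξ) := by
  rw [← intervalIntegrable_iff] at hb hbφ
  rcases le_total s t with hst | hts
  · rw [uIcc_of_le hst] at hb0 h
    rw [uIoc_of_le hst, ← integral_of_le hst]
    refine gronwall_integral_of_le hst hb hb0 hbφ fun τ hτ => ?_
    rw [integral_of_le hτ.1, ← uIoc_of_le hτ.1]
    exact h τ hτ
  · rw [uIcc_of_ge hts] at hb0 h
    rw [uIoc_of_ge hts, ← integral_of_le hts]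
    refine gronwall_integral_of_ge hts hb.symm hb0 hbφ.symm fun τ hτ => ?_
    rw [integral_of_le hτ.2, ← uIoc_of_ge hτ.2]
    exact h τ hτ

theorem integral_norm_le_sqrt_measureReal_mul_sqrt {α E : Type*} [MeasurableSpace α]
    [NormedAddCommGroup E] {μ : Measure α} [IsFiniteMeasure μ] {f : α → E} (hf : MemLp f 2 μ) :
    ∫ a, ‖f a‖ ∂μ ≤ √(μ.real univ) * √(∫ a, ‖f a‖ ^ 2 ∂μ) := by
  have h := integral_mul_le_Lp_mul_Lq_of_nonneg Real.HolderConjugate.two_two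
    (.of_forall fun _ => zero_le_one) (.of_forall fun a => norm_nonneg (f a))
    (memLp_const (1 : ℝ)) (by simpa using hf.norm)
  simpa [Real.sqrt_eq_rpow] using h

instance Real.isFiniteMeasure_restrict_uIoc (a b : ℝ) :
    IsFiniteMeasure (volume.restrict (Ι a b)) :=
  ⟨by simp [Real.volume_uIoc]⟩

theorem setIntegral_uIoc_norm_le_sqrt_mul_sqrt {E : Type*} [NormedAddCommGroup E] {f : ℝ → E}
    {a b : ℝ} {s : Set ℝ} (hs : Ι a b ⊆ s) (hf : MemLp f 2 (volume.restrict s)) :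
    ∫ x in Ι a b, ‖f x‖ ≤ √|b - a| * √(∫ x in s, ‖f x‖ ^ 2) := by
  refine (integral_norm_le_sqrt_measureReal_mul_sqrt
    (hf.mono_measure (Measure.restrict_mono hs le_rfl))).trans ?_
  rw [measureReal_restrict_apply_univ, measureReal_def, Real.volume_uIoc,
    ENNReal.toReal_ofReal (abs_nonneg _)]
  gcongr √_ * √?_
  exact setIntegral_mono_set ((memLp_two_iff_integrable_sq_norm hf.1).1 hf)
    (.of_forall fun _ => by positivity) hs.eventuallyLE

theorem IsHJPair.norm_sub_le_add_setIntegral {d : ℕ}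
    {B : ℝ → (EuclideanSpace ℂ (Fin d) →L[ℂ] EuclideanSpace ℂ (Fin d))} {J : Set ℝ}
    {y z : ℝ → EuclideanSpace ℂ (Fin d)} (hpair : IsHJPair d B J y z) {x₀ x : ℝ}
    (hx₀ : x₀ ∈ J) (hxJ : uIcc x₀ x ⊆ J) (hB : IntegrableOn (fun ξ => ‖B ξ‖) (Ι x₀ x))
    (hz : IntegrableOn (fun ξ => ‖z ξ‖) (Ι x₀ x))
    (hBy : IntegrableOn (fun ξ => ‖B ξ‖ * ‖y ξ - y x₀‖) (Ι x₀ x)) :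
    ∀ τ ∈ uIcc x₀ x, ‖y τ - y x₀‖ ≤
      (∫ ξ in Ι x₀ x, (‖B ξ‖ * ‖y x₀‖ + ‖z ξ‖)) + ∫ ξ in Ι x₀ τ, ‖B ξ‖ * ‖y ξ - y x₀‖ := by
  intro τ hτ
  have hsub : Ι x₀ τ ⊆ Ι x₀ x :=
    uIoc_subset_uIoc_of_uIcc_subset_uIcc (uIcc_subset_uIcc left_mem_uIcc hτ)
  have hlin : IntegrableOn (fun ξ => ‖B ξ‖ * ‖y x₀‖ + ‖z ξ‖) (Ι x₀ x) := (hB.mul_const _).add hz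
  have hpt (ξ : ℝ) :
      ‖B ξ (y ξ) - z ξ‖ ≤ ‖B ξ‖ * ‖y ξ - y x₀‖ + (‖B ξ‖ * ‖y x₀‖ + ‖z ξ‖) := by
    have := mul_le_mul_of_nonneg_left (norm_le_norm_sub_add (y ξ) (y x₀)) (norm_nonneg (B ξ))
    linarith [norm_sub_le (B ξ (y ξ)) (z ξ), (B ξ).le_opNorm (y ξ)]
  calc ‖y τ - y x₀‖ = ‖∫ ξ in x₀..τ, (B ξ (y ξ) - z ξ)‖ := by
        rw [hpair.2.2.2 τ (hxJ hτ) x₀ hx₀, add_sub_cancel_left]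
    _ ≤ ∫ ξ in Ι x₀ τ, ‖B ξ (y ξ) - z ξ‖ := norm_integral_le_integral_norm_uIoc
    _ ≤ ∫ ξ in Ι x₀ τ, (‖B ξ‖ * ‖y ξ - y x₀‖ + (‖B ξ‖ * ‖y x₀‖ + ‖z ξ‖)) :=
        integral_mono_of_nonneg (.of_forall fun _ => norm_nonneg _)
          ((hBy.mono_set hsub).add (hlin.mono_set hsub)) (.of_forall hpt)
    _ = (∫ ξ in Ι x₀ τ, ‖B ξ‖ * ‖y ξ - y x₀‖) + ∫ ξ in Ι x₀ τ, (‖B ξ‖ * ‖y x₀‖ + ‖z ξ‖) :=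
        integral_add (hBy.mono_set hsub) (hlin.mono_set hsub)
    _ ≤ (∫ ξ in Ι x₀ τ, ‖B ξ‖ * ‖y ξ - y x₀‖) + ∫ ξ in Ι x₀ x, (‖B ξ‖ * ‖y x₀‖ + ‖z ξ‖) := by
        gcongr
        exact .of_forall fun _ => by positivity
    _ = _ := add_comm _ _

/-- For integrable `B` with `K = exp(∫_ℝ ‖B‖)`, an interval `J ⊆ ℝ` and an
`H_J`-pair `(y,z)`, for all `x, x₀ ∈ J`:
`‖y(x) − y(x₀)‖ ≤ K (∫_{[x₀,x]} ‖B‖) ‖y(x₀)‖ + K √|x−x₀| (∫_J ‖z‖²)^{1/2}`. -/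
theorem stmt16 (d : ℕ)
    (B : ℝ → (EuclideanSpace ℂ (Fin d) →L[ℂ] EuclideanSpace ℂ (Fin d)))
    (hB : Integrable B)
    (J : Set ℝ) (hJ : J.OrdConnected)
    (y z : ℝ → EuclideanSpace ℂ (Fin d))
    (hpair : IsHJPair d B J y z) :
    ∀ x ∈ J, ∀ x₀ ∈ J,
      ‖y x - y x₀‖ ≤
        Real.exp (∫ ξ, ‖B ξ‖) * (∫ ξ in Set.uIcc x₀ x, ‖B ξ‖) * ‖y x₀‖ +
        Real.exp (∫ ξ, ‖B ξ‖) * Real.sqrt |x - x₀| *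
          Real.sqrt (∫ ξ in J, ‖z ξ‖ ^ 2) := by
  intro x hx x₀ hx₀
  have hS : uIcc x₀ x ⊆ J := hJ.uIcc_subset hx₀ hx
  have hSJ : Ι x₀ x ⊆ J := uIoc_subset_uIcc.trans hS
  have hz : MemLp z 2 (volume.restrict J) :=
    (memLp_two_iff_integrable_sq_norm hpair.2.1).2 hpair.2.2.1
  have hzS : IntegrableOn (fun ξ => ‖z ξ‖) (Ι x₀ x) :=
    ((hz.mono_measure (Measure.restrict_mono hSJ le_rfl)).integrable one_le_two).norm
  have hBy : IntegrableOn (fun ξ => ‖B ξ‖ * ‖y ξ - y x₀‖) (Ι x₀ x) :=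
    (hB.norm.integrableOn.mul_continuousOn ((hpair.1.mono hS).sub continuousOn_const).norm
      isCompact_uIcc).mono_set uIoc_subset_uIcc
  have hgron := gronwall_setIntegral_uIoc hB.norm.integrableOn (fun _ _ => norm_nonneg _) hBy
    (hpair.norm_sub_le_add_setIntegral hx₀ hS hB.norm.integrableOn hzS hBy)
  rw [integral_add (hB.norm.integrableOn.mul_const _) hzS, MeasureTheory.integral_mul_const,
    setIntegral_congr_set (f := fun ξ => ‖B ξ‖) uIoc_ae_eq_interval] at hgron
  calc ‖y x - y x₀‖
      ≤ ((∫ ξ in uIcc x₀ x, ‖B ξ‖) * ‖y x₀‖ + ∫ ξ in Ι x₀ x, ‖z ξ‖) *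
          Real.exp (∫ ξ in uIcc x₀ x, ‖B ξ‖) := hgron
    _ ≤ ((∫ ξ in uIcc x₀ x, ‖B ξ‖) * ‖y x₀‖ + √|x - x₀| * √(∫ ξ in J, ‖z ξ‖ ^ 2)) *
          Real.exp (∫ ξ, ‖B ξ‖) := by
      gcongr (_ * _ + ?_) * Real.exp ?_
      · exact setIntegral_uIoc_norm_le_sqrt_mul_sqrt hSJ hz
      · exact setIntegral_le_integral hB.norm (.of_forall fun _ => norm_nonneg _)
    _ = _ := by ring
end

section
/- Let B : ℝ → ℂ^{d×d} be measurable with ∫_ℝ ‖B(ξ)‖ dξ < ∞, and let (y, z) be an H_ℝ-pair with ∫_ℝ ‖y(ξ)‖² dξ < ∞. Then y(x) → 0 as x → +∞ and y(x) → 0 as x → −∞. (In the paper's notation: the space H = {y ∈ L²(ℝ,ℂ^d) : y ∈ AC_loc, −y' + By ∈ L²(ℝ,ℂ^d)} is contained in C₀(ℝ,ℂ^d), the continuous functions vanishing at ±∞.) -/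
/-!
On an interval `I` where `∫_I ‖B‖ ≤ 1/2`, comparing `y` at a maximum point `q` of `‖y‖` with any
point `p ∈ I` through the integral equation gives `‖y q‖ ≤ ‖y p‖ + ‖y q‖ / 2 + ∫_I ‖z‖`, so
`sup_I ‖y‖ ≤ 2 (‖y p‖ + ∫_I ‖z‖)`. On `I = [x - 1, x]` one may take `‖y p‖ ≤ ∫_I ‖y‖`, hence
`‖y x‖ ≤ 2 ∫_I (‖y‖ + ‖z‖)`, and by Cauchy–Schwarz this is at most a multiple of the square root
of the `L²` tails of `y` and `z` beyond `x - 1`. The reflection `x ↦ -x` turns the equation into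
one of the same form with `-B (-·)` and `-z (-·)`, which gives the limit at `-∞`.
-/

open MeasureTheory intervalIntegral

open Filter Set Topology

section

variable {E : Type*} [NormedAddCommGroup E]

lemma tendsto_setIntegral_Ici_atTop [NormedSpace ℝ E] {f : ℝ → E} (hf : Integrable f) :
    Tendsto (fun a => ∫ x in Ici a, f x) atTop (𝓝 0) := by
  have h := tendsto_setIntegral_of_antitone (μ := volume) (f := f) (fun _ => measurableSet_Ici)
    (fun _ _ hij => Ici_subset_Ici.2 hij) ⟨0, hf.integrableOn⟩
  have hempty : ⋂ a : ℝ, Ici a = ∅ :=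
    eq_empty_of_forall_notMem fun x hx => (lt_add_one x).not_ge (mem_iInter.1 hx (x + 1))
  simpa [hempty] using h

instance isProbabilityMeasure_restrict_Icc_sub_one (x : ℝ) :
    IsProbabilityMeasure (volume.restrict (Icc (x - 1) x)) :=
  ⟨by simp [Real.volume_Icc]⟩

lemma sq_integral_le_integral_sq {Ω : Type*} [MeasurableSpace Ω] {μ : Measure Ω}
    [IsProbabilityMeasure μ] {f : Ω → ℝ} (hf : MemLp f 2 μ) :
    (∫ ω, f ω ∂μ) ^ 2 ≤ ∫ ω, f ω ^ 2 ∂μ := by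
  have h := ProbabilityTheory.variance_nonneg f μ
  rw [ProbabilityTheory.variance_eq_sub hf] at h
  simpa using h

lemma tendsto_setIntegral_Icc_sub_one_norm_atTop {g : ℝ → E} (hg : MemLp g 2) :
    Tendsto (fun x => ∫ ξ in Icc (x - 1) x, ‖g ξ‖) atTop (𝓝 0) := by
  have hg2 : Integrable (fun ξ => ‖g ξ‖ ^ 2) :=
    (memLp_two_iff_integrable_sq_norm hg.1).1 hg
  have htail : Tendsto (fun x => √(∫ ξ in Ici (x - 1), ‖g ξ‖ ^ 2)) atTop (𝓝 0) := by
    have h := ((tendsto_setIntegral_Ici_atTop hg2).comp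
      (tendsto_atTop_add_const_right atTop (-1) tendsto_id)).sqrt
    rwa [Real.sqrt_zero] at h
  refine squeeze_zero (fun x => integral_nonneg fun _ => norm_nonneg _) (fun x => ?_) htail
  refine Real.le_sqrt_of_sq_le ((sq_integral_le_integral_sq (hg.norm.restrict _)).trans ?_)
  exact setIntegral_mono_set hg2.integrableOn (ae_of_all _ fun _ => by positivity)
    (Icc_subset_Ici_self.eventuallyLE)

lemma norm_intervalIntegral_le_setIntegral_Icc_norm [NormedSpace ℝ E] {f : ℝ → E} {a b s t : ℝ}
    (hf : IntegrableOn f (Icc a b)) (hs : s ∈ Icc a b) (ht : t ∈ Icc a b) :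
    ‖∫ ξ in s..t, f ξ‖ ≤ ∫ ξ in Icc a b, ‖f ξ‖ :=
  norm_integral_le_integral_norm_uIoc.trans <|
    setIntegral_mono_set hf.norm (ae_of_all _ fun _ => norm_nonneg _)
      (Ioc_subset_Icc_self.trans (uIcc_subset_Icc hs ht)).eventuallyLE

end

section

variable {𝕜 E : Type*} [NontriviallyNormedField 𝕜] [NormedAddCommGroup E] [NormedSpace 𝕜 E]
  {B : ℝ → E →L[𝕜] E} {y z : ℝ → E}

lemma integrableOn_clm_apply_Icc {a b : ℝ} (hB : IntegrableOn B (Icc a b))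
    (hy : ContinuousOn y (Icc a b)) : IntegrableOn (fun ξ => B ξ (y ξ)) (Icc a b) := by
  obtain ⟨C, hC⟩ := isCompact_Icc.exists_bound_of_continuousOn hy
  have hmeas : AEStronglyMeasurable (fun ξ => B ξ (y ξ)) (volume.restrict (Icc a b)) :=
    isBoundedBilinearMap_apply.continuous.comp_aestronglyMeasurable
      (hB.aestronglyMeasurable.prodMk (hy.aestronglyMeasurable measurableSet_Icc))
  refine (hB.norm.mul_const C).mono' hmeas ((ae_restrict_iff' measurableSet_Icc).2 ?_)
  exact ae_of_all _ fun ξ hξ => (B ξ).le_opNorm_of_le (hC ξ hξ)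

variable [NormedSpace ℝ E]

lemma norm_le_two_mul_of_setIntegral_norm_le_half {a b x p : ℝ}
    (hyz : ∀ x x₀, y x = y x₀ + ∫ ξ in x₀..x, (B ξ (y ξ) - z ξ))
    (hy : ContinuousOn y (Icc a b)) (hB : IntegrableOn B (Icc a b))
    (hz : IntegrableOn z (Icc a b)) (hB_half : ∫ ξ in Icc a b, ‖B ξ‖ ≤ 1 / 2)
    (hx : x ∈ Icc a b) (hp : p ∈ Icc a b) :
    ‖y x‖ ≤ 2 * (‖y p‖ + ∫ ξ in Icc a b, ‖z ξ‖) := by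
  obtain ⟨q, hq, hq_max⟩ := isCompact_Icc.exists_isMaxOn ⟨x, hx⟩ hy.norm
  have hBy := integrableOn_clm_apply_Icc hB hy
  have hBq : IntegrableOn (fun ξ => ‖B ξ‖ * ‖y q‖) (Icc a b) := hB.norm.mul_const _
  have hpointwise : ∀ ξ ∈ Icc a b, ‖B ξ (y ξ) - z ξ‖ ≤ ‖B ξ‖ * ‖y q‖ + ‖z ξ‖ := fun ξ hξ =>
    (norm_sub_le _ _).trans (add_le_add_left ((B ξ).le_opNorm_of_le (hq_max hξ)) _)
  have hyq : ‖y q‖ ≤ ‖y p‖ + (∫ ξ in Icc a b, ‖B ξ‖) * ‖y q‖ + ∫ ξ in Icc a b, ‖z ξ‖ :=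
    calc ‖y q‖ ≤ ‖y p‖ + ‖∫ ξ in p..q, (B ξ (y ξ) - z ξ)‖ := by
          rw [hyz q p]; exact norm_add_le _ _
      _ ≤ ‖y p‖ + ∫ ξ in Icc a b, ‖B ξ (y ξ) - z ξ‖ := by
          gcongr; exact norm_intervalIntegral_le_setIntegral_Icc_norm (hBy.sub hz) hp hq
      _ ≤ ‖y p‖ + ∫ ξ in Icc a b, (‖B ξ‖ * ‖y q‖ + ‖z ξ‖) := by
          gcongr ‖y p‖ + ?_
          exact setIntegral_mono_on (hBy.sub hz).norm (hBq.add hz.norm) measurableSet_Icc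
            hpointwise
      _ = ‖y p‖ + (∫ ξ in Icc a b, ‖B ξ‖) * ‖y q‖ + ∫ ξ in Icc a b, ‖z ξ‖ := by
          rw [integral_add hBq hz.norm, MeasureTheory.integral_mul_const, add_assoc]
  have hBq_half : (∫ ξ in Icc a b, ‖B ξ‖) * ‖y q‖ ≤ 1 / 2 * ‖y q‖ := by gcongr
  have hyx : ‖y x‖ ≤ ‖y q‖ := hq_max hx
  linarith

theorem tendsto_atTop_zero_of_eq_add_integral
    (hyz : ∀ x x₀, y x = y x₀ + ∫ ξ in x₀..x, (B ξ (y ξ) - z ξ))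
    (hB : Integrable B) (hy : Continuous y) (hy2 : MemLp y 2) (hz2 : MemLp z 2) :
    Tendsto y atTop (𝓝 0) := by
  have hshift : Tendsto (fun x : ℝ => x - 1) atTop atTop :=
    tendsto_atTop_add_const_right atTop (-1) tendsto_id
  have hB_half : ∀ᶠ x in atTop, ∫ ξ in Ici (x - 1), ‖B ξ‖ < 1 / 2 :=
    hshift.eventually ((tendsto_order.1 (tendsto_setIntegral_Ici_atTop hB.norm)).2 _ one_half_pos)
  have hbound : ∀ᶠ x in atTop,
      ‖y x‖ ≤ 2 * ((∫ ξ in Icc (x - 1) x, ‖y ξ‖) + ∫ ξ in Icc (x - 1) x, ‖z ξ‖) := by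
    filter_upwards [hB_half] with x hx
    obtain ⟨p, hp, hp_le⟩ := exists_le_setAverage (μ := volume) (s := Icc (x - 1) x)
      (by simp) (by simp) hy.norm.integrableOn_Icc
    rw [average_eq_integral] at hp_le
    have hB_Icc : ∫ ξ in Icc (x - 1) x, ‖B ξ‖ ≤ 1 / 2 :=
      (setIntegral_mono_set hB.norm.integrableOn (ae_of_all _ fun _ => norm_nonneg _)
        Icc_subset_Ici_self.eventuallyLE).trans hx.le
    calc ‖y x‖ ≤ 2 * (‖y p‖ + ∫ ξ in Icc (x - 1) x, ‖z ξ‖) :=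
          norm_le_two_mul_of_setIntegral_norm_le_half hyz hy.continuousOn hB.integrableOn
            ((hz2.restrict _).integrable one_le_two) hB_Icc ⟨by linarith, le_rfl⟩ hp
      _ ≤ 2 * ((∫ ξ in Icc (x - 1) x, ‖y ξ‖) + ∫ ξ in Icc (x - 1) x, ‖z ξ‖) := by gcongr
  have hlim := ((tendsto_setIntegral_Icc_sub_one_norm_atTop hy2).add
    (tendsto_setIntegral_Icc_sub_one_norm_atTop hz2)).const_mul 2
  rw [add_zero, mul_zero] at hlim
  exact squeeze_zero_norm' hbound hlim

lemma eq_add_integral_comp_neg (hyz : ∀ x x₀, y x = y x₀ + ∫ ξ in x₀..x, (B ξ (y ξ) - z ξ))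
    (x x₀ : ℝ) :
    y (-x) = y (-x₀) + ∫ ξ in x₀..x, ((-B (-ξ)) (y (-ξ)) - -z (-ξ)) := by
  have hintegrand : ∀ ξ, (-B (-ξ)) (y (-ξ)) - -z (-ξ) = -(B (-ξ) (y (-ξ)) - z (-ξ)) := fun ξ => by
    rw [neg_apply, neg_sub, sub_neg_eq_add, neg_add_eq_sub]
  simp_rw [hintegrand, intervalIntegral.integral_neg,
    intervalIntegral.integral_comp_neg (fun ξ => B ξ (y ξ) - z ξ), ← intervalIntegral.integral_symm]
  exact hyz (-x) (-x₀)

theorem tendsto_atBot_zero_of_eq_add_integral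
    (hyz : ∀ x x₀, y x = y x₀ + ∫ ξ in x₀..x, (B ξ (y ξ) - z ξ))
    (hB : Integrable B) (hy : Continuous y) (hy2 : MemLp y 2) (hz2 : MemLp z 2) :
    Tendsto y atBot (𝓝 0) := by
  have hneg := Measure.measurePreserving_neg (volume : Measure ℝ)
  have h := tendsto_atTop_zero_of_eq_add_integral (eq_add_integral_comp_neg hyz) hB.comp_neg.neg
    (hy.comp continuous_neg) (hy2.comp_measurePreserving hneg)
    (hz2.comp_measurePreserving hneg).neg
  simpa [Function.comp_def] using h.comp tendsto_neg_atBot_atTop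

end

/-- For integrable `B` and an `H_ℝ`-pair `(y,z)` with `∫_ℝ ‖y‖² < ∞`,
one has `y(x) → 0` as `x → +∞` and as `x → −∞` (the space `H` embeds into
`C₀(ℝ, ℂ^d)`). -/
theorem stmt17 (d : ℕ)
    (B : ℝ → (EuclideanSpace ℂ (Fin d) →L[ℂ] EuclideanSpace ℂ (Fin d)))
    (hB : Integrable B)
    (y z : ℝ → EuclideanSpace ℂ (Fin d))
    (hpair : IsHJPair d B Set.univ y z)
    (hy2 : Integrable (fun ξ => ‖y ξ‖ ^ 2)) :
    Filter.Tendsto y Filter.atTop (nhds 0) ∧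
    Filter.Tendsto y Filter.atBot (nhds 0) := by
  obtain ⟨hy, hz, hz2, hyz⟩ := hpair
  rw [continuousOn_univ] at hy
  rw [Measure.restrict_univ] at hz
  rw [integrableOn_univ] at hz2
  have hyz' : ∀ x x₀, y x = y x₀ + ∫ ξ in x₀..x, (B ξ (y ξ) - z ξ) := fun x x₀ =>
    hyz x (mem_univ x) x₀ (mem_univ x₀)
  have hyL2 : MemLp y 2 := (memLp_two_iff_integrable_sq_norm hy.aestronglyMeasurable).2 hy2
  have hzL2 : MemLp z 2 := (memLp_two_iff_integrable_sq_norm hz).2 hz2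
  exact ⟨tendsto_atTop_zero_of_eq_add_integral hyz' hB hy hyL2 hzL2,
    tendsto_atBot_zero_of_eq_add_integral hyz' hB hy hyL2 hzL2⟩
end

section
/- Let B : ℝ → ℂ^{d×d} be measurable with ∫_ℝ ‖B(ξ)‖ dξ < ∞. Then there exists a constant c > 0, depending only on B, such that for every compact interval J = [a, b] with b − a ≥ 1, every H_J-pair (y, z) with ∫_J ‖y‖² < ∞, every measurable A : J → ℂ^{d×d} with M := ess sup_{x∈J} ‖A(x) − B(x)‖ < ∞, and all matrices R₋, R₊ ∈ ℂ^{d×d}: ∫_J ‖z(x) + (A(x) − B(x))y(x)‖² dx + ‖R₋ y(a) + R₊ y(b)‖² ≤ c · (1 + M² + ‖R₋‖² + ‖R₊‖²) · (∫_J ‖y‖² + ∫_J ‖z‖²). (Since −y' + Ay = z + (A − B)y, this is the uniform boundedness in J of the finite-interval boundary value operators F_N(λ)y = (−y' + A(λ,·)y, R₋(λ)y(a) + R₊(λ)y(b)) on the spaces H_J.) -/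
open MeasureTheory intervalIntegral

/-!
Fix `R ≥ 0` with `∫ (‖B‖ - R)⁺ ≤ 1/2`. On a unit interval `I`, pick `x₀` with `‖y x₀‖ ≤ ∫_I ‖y‖`;
splitting `‖B‖ = min ‖B‖ R + (‖B‖ - R)⁺` in the integral equation gives
`sup_I ‖y‖ ≤ (1 + R) ∫_I ‖y‖ + (sup_I ‖y‖) / 2 + ∫_I ‖z‖`, hence, by Cauchy–Schwarz,
`‖y x‖² ≤ 8 (1 + R)² ‖(y, z)‖²_{H_J}` at every point of an interval `J` of length at least one.
This controls the boundary term through `y a` and `y b`, while `‖A - B‖ ≤ M₀` controls the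
interior term pointwise.
-/

open Set Filter

theorem Real.norm_sub_min_le {a R : ℝ} (hR : 0 ≤ R) : ‖a - min a R‖ ≤ ‖a‖ := by
  simp only [Real.norm_eq_abs, abs_le]
  constructor <;> cases min_cases a R <;> cases abs_cases a <;> linarith

section Truncation
variable {α : Type*} [MeasurableSpace α] {μ : Measure α} {f : α → ℝ}

theorem MeasureTheory.Integrable.sub_min (hf : Integrable f μ) {R : ℝ} (hR : 0 ≤ R) :
    Integrable (fun x => f x - min (f x) R) μ :=
  hf.norm.mono' (hf.aemeasurable.sub (hf.aemeasurable.min aemeasurable_const)).aestronglyMeasurable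
    (ae_of_all _ fun _ => Real.norm_sub_min_le hR)

theorem MeasureTheory.Integrable.exists_integral_sub_min_le (hf : Integrable f μ)
    {ε : ℝ} (hε : 0 < ε) : ∃ R, 0 ≤ R ∧ ∫ x, (f x - min (f x) R) ∂μ ≤ ε := by
  have hlim : Tendsto (fun n : ℕ => ∫ x, (f x - min (f x) n) ∂μ) atTop (nhds 0) := by
    rw [← integral_zero α ℝ]
    refine tendsto_integral_of_dominated_convergence _ (fun n => (hf.sub_min n.cast_nonneg).1)
      hf.norm (fun n => ae_of_all _ fun _ => Real.norm_sub_min_le n.cast_nonneg)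
      (ae_of_all _ fun x => tendsto_const_nhds.congr' ?_)
    filter_upwards [eventually_ge_atTop ⌈f x⌉₊] with n hn
    rw [min_eq_left ((Nat.le_ceil _).trans (by exact_mod_cast hn)), sub_self]
  obtain ⟨n, hn⟩ := (hlim.eventually (gt_mem_nhds hε)).exists
  exact ⟨n, n.cast_nonneg, hn.le⟩

end Truncation

section SquareBounds
variable {α : Type*} [MeasurableSpace α] {μ : Measure α}

theorem MeasureTheory.sq_integral_le_integral_sq [IsProbabilityMeasure μ] {f : α → ℝ}
    (hf : Integrable f μ) (hf2 : Integrable (fun x => f x ^ 2) μ) :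
    (∫ x, f x ∂μ) ^ 2 ≤ ∫ x, f x ^ 2 ∂μ :=
  (even_two.convexOn_pow (𝕜 := ℝ)).map_integral_le (continuous_pow 2).continuousOn isClosed_univ
    (ae_of_all _ fun _ => mem_univ _) hf hf2

theorem norm_add_sq_le {E : Type*} [SeminormedAddGroup E] (u v : E) :
    ‖u + v‖ ^ 2 ≤ 2 * (‖u‖ ^ 2 + ‖v‖ ^ 2) :=
  (pow_le_pow_left₀ (norm_nonneg _) (norm_add_le u v) 2).trans add_sq_le

theorem MeasureTheory.integral_sq_norm_add_apply_le {E F : Type*} [NormedAddCommGroup E]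
    [NormedSpace ℂ E] [NormedAddCommGroup F] [NormedSpace ℂ F] {T : α → E →L[ℂ] F} {M : ℝ}
    (hT : ∀ᵐ x ∂μ, ‖T x‖ ≤ M) {y : α → E} {z : α → F}
    (hy : Integrable (fun x => ‖y x‖ ^ 2) μ) (hz : Integrable (fun x => ‖z x‖ ^ 2) μ) :
    ∫ x, ‖z x + T x (y x)‖ ^ 2 ∂μ ≤ 2 * (∫ x, ‖z x‖ ^ 2 ∂μ + M ^ 2 * ∫ x, ‖y x‖ ^ 2 ∂μ) := by
  rw [← integral_const_mul, ← integral_add hz (hy.const_mul _), ← integral_const_mul]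
  refine integral_mono_of_nonneg (ae_of_all _ fun _ => sq_nonneg _)
    ((hz.add (hy.const_mul _)).const_mul _) ?_
  filter_upwards [hT] with x hx
  have hTy : ‖T x (y x)‖ ^ 2 ≤ M ^ 2 * ‖y x‖ ^ 2 := by
    rw [← mul_pow]
    exact pow_le_pow_left₀ (norm_nonneg _)
      ((T x).le_opNorm _ |>.trans (mul_le_mul_of_nonneg_right hx (norm_nonneg _))) 2
  linarith [norm_add_sq_le (z x) (T x (y x))]

end SquareBounds

instance Real.isProbabilityMeasure_restrict_Icc_add_one (a : ℝ) :
    IsProbabilityMeasure (volume.restrict (Icc a (a + 1))) :=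
  ⟨by simp⟩

namespace IsHJPair

variable {d : ℕ} {B : ℝ → (EuclideanSpace ℂ (Fin d) →L[ℂ] EuclideanSpace ℂ (Fin d))}
  {J : Set ℝ} {y z : ℝ → EuclideanSpace ℂ (Fin d)}

theorem mono {J' : Set ℝ} (h : IsHJPair d B J y z) (hJ' : J' ⊆ J) : IsHJPair d B J' y z :=
  ⟨h.1.mono hJ', h.2.1.mono_measure (Measure.restrict_mono hJ' le_rfl), h.2.2.1.mono_set hJ',
    fun x hx x₀ hx₀ => h.2.2.2 x (hJ' hx) x₀ (hJ' hx₀)⟩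

theorem integrableOn_right (h : IsHJPair d B J y z) (hJ : volume J ≠ ⊤) : IntegrableOn z J :=
  have : IsFiniteMeasure (volume.restrict J) := isFiniteMeasure_restrict.2 hJ
  ((memLp_two_iff_integrable_sq_norm h.2.1).2 h.2.2.1).integrable one_le_two

theorem norm_sub_le_of_forall_norm_le (hB : Integrable B) {R S a b : ℝ} (hR : 0 ≤ R)
    (h : IsHJPair d B (Icc a b) y z) (hS : ∀ x ∈ Icc a b, ‖y x‖ ≤ S) {x x₀ : ℝ}
    (hx : x ∈ Icc a b) (hx₀ : x₀ ∈ Icc a b) :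
    ‖y x - y x₀‖ ≤ R * (∫ ξ in Icc a b, ‖y ξ‖) + S * (∫ ξ, (‖B ξ‖ - min ‖B ξ‖ R))
      + ∫ ξ in Icc a b, ‖z ξ‖ := by
  have hy_int : IntegrableOn (fun ξ => ‖y ξ‖) (Icc a b) :=
    h.1.norm.integrableOn_compact isCompact_Icc
  have htail_int := hB.norm.sub_min hR
  have hz_int := (h.integrableOn_right (by simp [Real.volume_Icc])).norm
  have hg : ∀ ξ ∈ Icc a b,
      ‖B ξ (y ξ) - z ξ‖ ≤ R * ‖y ξ‖ + S * (‖B ξ‖ - min ‖B ξ‖ R) + ‖z ξ‖ := fun ξ hξ =>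
    calc ‖B ξ (y ξ) - z ξ‖ ≤ ‖B ξ‖ * ‖y ξ‖ + ‖z ξ‖ :=
          (norm_sub_le _ _).trans (add_le_add_left ((B ξ).le_opNorm _) _)
      _ = min ‖B ξ‖ R * ‖y ξ‖ + (‖B ξ‖ - min ‖B ξ‖ R) * ‖y ξ‖ + ‖z ξ‖ := by ring
      _ ≤ R * ‖y ξ‖ + S * (‖B ξ‖ - min ‖B ξ‖ R) + ‖z ξ‖ := by
          gcongr ?_ + ?_ + _
          · exact mul_le_mul_of_nonneg_right (min_le_right _ _) (norm_nonneg _)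
          · rw [mul_comm]
            exact mul_le_mul_of_nonneg_right (hS ξ hξ) (sub_nonneg.2 (min_le_left _ _))
  have hS0 : 0 ≤ S := (norm_nonneg _).trans (hS x hx)
  have hg_int : IntegrableOn (fun ξ => R * ‖y ξ‖ + S * (‖B ξ‖ - min ‖B ξ‖ R) + ‖z ξ‖) (Icc a b) :=
    ((hy_int.const_mul R).add (htail_int.integrableOn.const_mul S)).add hz_int
  have hsub : uIoc x₀ x ⊆ Icc a b := uIoc_subset_uIcc.trans (uIcc_subset_Icc hx₀ hx)
  calc ‖y x - y x₀‖ = ‖∫ ξ in x₀..x, (B ξ (y ξ) - z ξ)‖ := by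
        rw [h.2.2.2 x hx x₀ hx₀, add_sub_cancel_left]
    _ ≤ ∫ ξ in uIoc x₀ x, ‖B ξ (y ξ) - z ξ‖ := norm_integral_le_integral_norm_uIoc
    _ ≤ ∫ ξ in uIoc x₀ x, (R * ‖y ξ‖ + S * (‖B ξ‖ - min ‖B ξ‖ R) + ‖z ξ‖) :=
        integral_mono_of_nonneg (ae_of_all _ fun _ => norm_nonneg _) (hg_int.mono_set hsub)
          ((ae_restrict_iff' measurableSet_uIoc).2 (ae_of_all _ fun ξ hξ => hg ξ (hsub hξ)))
    _ ≤ ∫ ξ in Icc a b, (R * ‖y ξ‖ + S * (‖B ξ‖ - min ‖B ξ‖ R) + ‖z ξ‖) :=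
        setIntegral_mono_set hg_int
          ((ae_restrict_iff' measurableSet_Icc).2
            (ae_of_all _ fun ξ hξ => (norm_nonneg _).trans (hg ξ hξ)))
          hsub.eventuallyLE
    _ = R * (∫ ξ in Icc a b, ‖y ξ‖) + S * (∫ ξ in Icc a b, (‖B ξ‖ - min ‖B ξ‖ R))
          + ∫ ξ in Icc a b, ‖z ξ‖ := by
        rw [integral_add (f := fun ξ => R * ‖y ξ‖ + S * (‖B ξ‖ - min ‖B ξ‖ R))
            ((hy_int.const_mul R).add (htail_int.integrableOn.const_mul S)) hz_int,
          integral_add (hy_int.const_mul R) (htail_int.integrableOn.const_mul S),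
          MeasureTheory.integral_const_mul, MeasureTheory.integral_const_mul]
    _ ≤ _ := by
        have htail := setIntegral_le_integral (s := Icc a b) htail_int
          (ae_of_all _ fun ξ => sub_nonneg.2 (min_le_left _ _))
        gcongr

theorem norm_le_of_Icc_add_one (hB : Integrable B) {R : ℝ} (hR : 0 ≤ R)
    (hBR : ∫ ξ, (‖B ξ‖ - min ‖B ξ‖ R) ≤ 1 / 2) {a : ℝ} (h : IsHJPair d B (Icc a (a + 1)) y z)
    {x : ℝ} (hx : x ∈ Icc a (a + 1)) :
    ‖y x‖ ≤ 2 * ((1 + R) * (∫ ξ in Icc a (a + 1), ‖y ξ‖) + ∫ ξ in Icc a (a + 1), ‖z ξ‖) := by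
  obtain ⟨xm, hxm, hmax⟩ := isCompact_Icc.exists_isMaxOn ⟨x, hx⟩ h.1.norm
  obtain ⟨x₀, hx₀, hx₀_le⟩ := exists_le_setAverage (μ := volume) (by simp)
    (by simp) (h.1.norm.integrableOn_compact isCompact_Icc)
  rw [average_eq_integral] at hx₀_le
  have hS0 : 0 ≤ ‖y xm‖ := norm_nonneg _
  have hincr := h.norm_sub_le_of_forall_norm_le (S := ‖y xm‖) hB hR (fun _ hξ => hmax hξ) hxm hx₀
  have htail := mul_le_mul_of_nonneg_left hBR hS0
  have hxm_le : ‖y x‖ ≤ ‖y xm‖ := hmax hx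
  linarith [norm_le_insert' (y xm) (y x₀)]

theorem sq_norm_le_of_Icc_add_one (hB : Integrable B) {R : ℝ} (hR : 0 ≤ R)
    (hBR : ∫ ξ, (‖B ξ‖ - min ‖B ξ‖ R) ≤ 1 / 2) {a : ℝ} (h : IsHJPair d B (Icc a (a + 1)) y z)
    {x : ℝ} (hx : x ∈ Icc a (a + 1)) :
    ‖y x‖ ^ 2 ≤ 8 * (1 + R) ^ 2 *
      ((∫ ξ in Icc a (a + 1), ‖y ξ‖ ^ 2) + ∫ ξ in Icc a (a + 1), ‖z ξ‖ ^ 2) := by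
  have hy := h.1.norm.integrableOn_compact (μ := volume) isCompact_Icc
  have hy2 := (h.1.norm.pow 2).integrableOn_compact (μ := volume) isCompact_Icc
  have hz := (h.integrableOn_right (by simp)).norm
  have hCSy := sq_integral_le_integral_sq hy hy2
  have hCSz := sq_integral_le_integral_sq hz h.2.2.1
  have hsup := pow_le_pow_left₀ (norm_nonneg _) (h.norm_le_of_Icc_add_one hB hR hBR hx) 2
  have hsq := add_sq_le (a := (1 + R) * ∫ ξ in Icc a (a + 1), ‖y ξ‖)
    (b := ∫ ξ in Icc a (a + 1), ‖z ξ‖)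
  have h1R : 1 ≤ (1 + R) ^ 2 := by nlinarith
  have hQz : 0 ≤ ∫ ξ in Icc a (a + 1), ‖z ξ‖ ^ 2 := integral_nonneg fun ξ => sq_nonneg _
  nlinarith

theorem sq_norm_le (hB : Integrable B) {R : ℝ} (hR : 0 ≤ R)
    (hBR : ∫ ξ, (‖B ξ‖ - min ‖B ξ‖ R) ≤ 1 / 2) {a b : ℝ} (hab : a + 1 ≤ b)
    (h : IsHJPair d B (Icc a b) y z) {x : ℝ} (hx : x ∈ Icc a b) :
    ‖y x‖ ^ 2 ≤ 8 * (1 + R) ^ 2 * ((∫ ξ in Icc a b, ‖y ξ‖ ^ 2) + ∫ ξ in Icc a b, ‖z ξ‖ ^ 2) := by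
  obtain ⟨α, hsub, hxα⟩ : ∃ α, Icc α (α + 1) ⊆ Icc a b ∧ x ∈ Icc α (α + 1) := by
    rcases le_total x (b - 1) with hxb | hxb
    · exact ⟨x, Icc_subset_Icc hx.1 (by linarith), left_mem_Icc.2 (by linarith)⟩
    · exact ⟨b - 1, Icc_subset_Icc (by linarith) (by linarith), hxb, by linarith [hx.2]⟩
  have hy2 : IntegrableOn (fun ξ => ‖y ξ‖ ^ 2) (Icc a b) :=
    (h.1.norm.pow 2).integrableOn_compact isCompact_Icc
  have hmono {f : ℝ → ℝ} (hf : IntegrableOn (fun ξ => f ξ ^ 2) (Icc a b)) :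
      ∫ ξ in Icc α (α + 1), f ξ ^ 2 ≤ ∫ ξ in Icc a b, f ξ ^ 2 :=
    setIntegral_mono_set hf (ae_of_all _ fun _ => sq_nonneg _) hsub.eventuallyLE
  calc ‖y x‖ ^ 2
      ≤ 8 * (1 + R) ^ 2 *
          ((∫ ξ in Icc α (α + 1), ‖y ξ‖ ^ 2) + ∫ ξ in Icc α (α + 1), ‖z ξ‖ ^ 2) :=
        (h.mono hsub).sq_norm_le_of_Icc_add_one hB hR hBR hxα
    _ ≤ _ := by
        gcongr ?_ * (?_ + ?_)
        exacts [hmono hy2, hmono h.2.2.1]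

end IsHJPair

/-- uniform boundedness of the finite-interval boundary value operators.
There is `c > 0`, depending only on the integrable coefficient `B`, such that for every
compact interval `J = [a,b]` with `b − a ≥ 1`, every `H_J`-pair `(y,z)` with
`∫_J ‖y‖² < ∞`, every measurable `A : J → ℂ^{d×d}` with `‖A − B‖ ≤ M₀` a.e. on `J`, and
all matrices `R₋, R₊`:
`∫_J ‖z + (A−B)y‖² + ‖R₋ y(a) + R₊ y(b)‖² ≤ c (1 + M₀² + ‖R₋‖² + ‖R₊‖²)(∫_J ‖y‖² + ∫_J ‖z‖²)`. -/
theorem stmt19 (d : ℕ)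
    (B : ℝ → (EuclideanSpace ℂ (Fin d) →L[ℂ] EuclideanSpace ℂ (Fin d)))
    (hB : Integrable B) :
    ∃ c > 0,
      ∀ a b : ℝ, a + 1 ≤ b →
      ∀ y z : ℝ → EuclideanSpace ℂ (Fin d),
        IsHJPair d B (Set.Icc a b) y z →
        IntegrableOn (fun ξ => ‖y ξ‖ ^ 2) (Set.Icc a b) →
        ∀ A : ℝ → (EuclideanSpace ℂ (Fin d) →L[ℂ] EuclideanSpace ℂ (Fin d)),
          AEStronglyMeasurable A (volume.restrict (Set.Icc a b)) →
          ∀ M₀ : ℝ,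
            (∀ᵐ x ∂(volume.restrict (Set.Icc a b)), ‖A x - B x‖ ≤ M₀) →
            ∀ Rm Rp : EuclideanSpace ℂ (Fin d) →L[ℂ] EuclideanSpace ℂ (Fin d),
              (∫ x in Set.Icc a b, ‖z x + (A x - B x) (y x)‖ ^ 2) +
                  ‖Rm (y a) + Rp (y b)‖ ^ 2
                ≤ c * (1 + M₀ ^ 2 + ‖Rm‖ ^ 2 + ‖Rp‖ ^ 2) *
                  ((∫ ξ in Set.Icc a b, ‖y ξ‖ ^ 2) + ∫ ξ in Set.Icc a b, ‖z ξ‖ ^ 2) := by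
  obtain ⟨R, hR, hBR⟩ := hB.norm.exists_integral_sub_min_le one_half_pos
  set K := 8 * (1 + R) ^ 2
  refine ⟨2 * K, by positivity, fun a b hab y z h hy2 A _ M₀ hM Rm Rp => ?_⟩
  have hya := h.sq_norm_le hB hR hBR hab (left_mem_Icc.2 (by linarith))
  have hyb := h.sq_norm_le hB hR hBR hab (right_mem_Icc.2 (by linarith))
  have hinterior := integral_sq_norm_add_apply_le hM hy2 h.2.2.1
  set Qy := ∫ ξ in Icc a b, ‖y ξ‖ ^ 2
  set Qz := ∫ ξ in Icc a b, ‖z ξ‖ ^ 2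
  have hboundary :
      ‖Rm (y a) + Rp (y b)‖ ^ 2 ≤ 2 * (‖Rm‖ ^ 2 * ‖y a‖ ^ 2 + ‖Rp‖ ^ 2 * ‖y b‖ ^ 2) := by
    refine (norm_add_sq_le (Rm (y a)) (Rp (y b))).trans ?_
    simp only [← mul_pow]
    gcongr <;> exact ContinuousLinearMap.le_opNorm _ _
  have hK : 1 ≤ K := by nlinarith
  have hQy : 0 ≤ Qy := integral_nonneg fun _ => sq_nonneg _
  have hQz : 0 ≤ Qz := integral_nonneg fun _ => sq_nonneg _
  nlinarith [mul_le_mul_of_nonneg_left hya (sq_nonneg ‖Rm‖),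
    mul_le_mul_of_nonneg_left hyb (sq_nonneg ‖Rp‖), mul_nonneg (sub_nonneg.2 hK) hQz, mul_nonneg (zero_le_one.trans hK) hQy,
    mul_nonneg (mul_nonneg (sub_nonneg.2 hK) (sq_nonneg M₀)) hQy,
    mul_nonneg (mul_nonneg (zero_le_one.trans hK) (sq_nonneg M₀)) hQz]
end
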